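/- Ramanujan's expansion of the divisor-sum function: for every positive integer n, σ(n) = (π²n/6) · Σ_{q=1}^{∞} c_q(n)/q², where the series converges absolutely. -/

import Mathlib

open Finset Complex

noncomputable def ramanujanSum (q n : ℕ) : ℂ :=
  ∑ p ∈ (Finset.Icc 1 q).filter (fun p => Nat.Coprime p q),
    Complex.exp (2 * Real.pi * Complex.I * p * n / q)

lemma sum_exp_eq (m n : ℕ) (hm : 0 < m) :
    ∑ k ∈ Finset.Icc 1 m, Complex.exp (2 * Real.pi * Complex.I * k * n / m)
      = if m ∣ n then (m : ℂ) else 0 := by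
  have hm0 : (m : ℂ) ≠ 0 := Nat.cast_ne_zero.mpr hm.ne'
  set ζ : ℂ := Complex.exp (2 * Real.pi * Complex.I * n / m) with hζ
  have hterm : ∀ k : ℕ, Complex.exp (2 * Real.pi * Complex.I * k * n / m) = ζ ^ k := by
    intro k
    rw [hζ, ← Complex.exp_nat_mul]
    ring_nf
  have hζm : ζ ^ m = 1 := by
    rw [hζ, ← Complex.exp_nat_mul]
    have : (m : ℂ) * (2 * Real.pi * Complex.I * n / m) = n * (2 * Real.pi * Complex.I) := by
      field_simp
    rw [this]
    exact Complex.exp_int_mul_two_pi_mul_I n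
  have hζ1 : ζ = 1 ↔ m ∣ n := by
    rw [hζ, Complex.exp_eq_one_iff]
    constructor
    · rintro ⟨k, hk⟩
      have h2 : (2 * Real.pi * Complex.I) ≠ 0 := by
        simp [Real.pi_ne_zero, Complex.I_ne_zero, Complex.ext_iff, Real.pi_pos.ne']
      have h1 : (2 * (Real.pi:ℂ) * Complex.I) * (n : ℂ) = (2 * (Real.pi:ℂ) * Complex.I) * ((k : ℂ) * m) := by
        field_simp at hk
        linear_combination (2 * (Real.pi:ℂ) * Complex.I) * hk
      have h4 : (n : ℂ) = (k : ℂ) * m := mul_left_cancel₀ h2 h1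
      have h5 : (n : ℤ) = k * m := by exact_mod_cast h4
      exact Int.natCast_dvd_natCast.mp ⟨k, by rw [h5, mul_comm]⟩
    · rintro ⟨c, rfl⟩
      exact ⟨c, by push_cast; rw [mul_div_assoc, mul_div_cancel_left₀ _ hm0]; ring⟩
  simp only [hterm]
  by_cases h : m ∣ n
  · simp [h, hζ1.mpr h]
  · rw [if_neg h]
    have hne : ζ ≠ 1 := fun he => h (hζ1.mp he)
    have hIcc : Finset.Icc 1 m = Finset.Ico 1 (m+1) := by
      rw [Finset.Ico_add_one_right_eq_Icc]
    rw [hIcc, geom_sum_Ico hne (by omega : 1 ≤ m + 1), pow_succ, hζm]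
    simp

open ArithmeticFunction in
lemma moebius_sum_divisors (m : ℕ) :
    ∑ d ∈ m.divisors, ((ArithmeticFunction.moebius d : ℤ) : ℂ) = if m = 1 then 1 else 0 := by
  have h := congrArg (fun f : ArithmeticFunction ℤ => (f m : ℤ)) ArithmeticFunction.moebius_mul_coe_zeta
  simp only [ArithmeticFunction.coe_mul_zeta_apply, ArithmeticFunction.one_apply] at h
  rw [← Int.cast_sum, h]
  split <;> simp

lemma ramanujanSum_eq (q n : ℕ) (hq : 0 < q) :
    ramanujanSum q n =
      ∑ d ∈ q.divisors, ((ArithmeticFunction.moebius (q / d) : ℤ) : ℂ) *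
        (if d ∣ n then (d : ℂ) else 0) := by
  have hq0 : (q : ℂ) ≠ 0 := Nat.cast_ne_zero.mpr hq.ne'
  -- Step 1: expand coprimality indicator via Möbius
  have step1 : ramanujanSum q n =
      ∑ p ∈ Finset.Icc 1 q, ∑ d ∈ q.divisors,
        (if d ∣ p then ((ArithmeticFunction.moebius d : ℤ) : ℂ) else 0) *
          Complex.exp (2 * Real.pi * Complex.I * p * n / q) := by
    rw [ramanujanSum, Finset.sum_filter]
    refine Finset.sum_congr rfl fun p hp => ?_
    rw [Finset.mem_Icc] at hp
    have hg : Nat.gcd p q ≠ 0 := Nat.gcd_ne_zero_right hq.ne'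
    have hfilt : (Nat.gcd p q).divisors = q.divisors.filter (· ∣ p) := by
      ext d
      simp only [Nat.mem_divisors, Finset.mem_filter]
      constructor
      · rintro ⟨hd, -⟩
        exact ⟨⟨hd.trans (Nat.gcd_dvd_right p q), hq.ne'⟩, hd.trans (Nat.gcd_dvd_left p q)⟩
      · rintro ⟨⟨hdq, -⟩, hdp⟩
        exact ⟨Nat.dvd_gcd hdp hdq, hg⟩
    have hind : (if Nat.Coprime p q then
        Complex.exp (2 * Real.pi * Complex.I * p * n / q) else 0) =
        (∑ d ∈ q.divisors, if d ∣ p then ((ArithmeticFunction.moebius d : ℤ) : ℂ) else 0) *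
          Complex.exp (2 * Real.pi * Complex.I * p * n / q) := by
      rw [← Finset.sum_filter, ← hfilt, moebius_sum_divisors]
      unfold Nat.Coprime
      split <;> simp [*]
    rw [hind, Finset.sum_mul]
  rw [step1, Finset.sum_comm]
  -- Step 2: for each divisor d, reindex the inner sum by p = d * k
  have step2 : ∀ d ∈ q.divisors,
      (∑ p ∈ Finset.Icc 1 q,
        (if d ∣ p then ((ArithmeticFunction.moebius d : ℤ) : ℂ) else 0) *
          Complex.exp (2 * Real.pi * Complex.I * p * n / q)) =
      ((ArithmeticFunction.moebius d : ℤ) : ℂ) *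
        (if (q / d) ∣ n then ((q / d : ℕ) : ℂ) else 0) := by
    intro d hd
    rw [Nat.mem_divisors] at hd
    obtain ⟨⟨m, rfl⟩, -⟩ := hd
    have hd0 : 0 < d := Nat.pos_of_ne_zero (by rintro rfl; simp at hq)
    have hm0 : 0 < m := Nat.pos_of_ne_zero (by rintro rfl; simp at hq)
    rw [Nat.mul_div_cancel_left m hd0]
    have key : (∑ p ∈ (Finset.Icc 1 (d * m)).filter (d ∣ ·),
        Complex.exp (2 * Real.pi * Complex.I * p * n / ((d * m : ℕ) : ℂ))) =
        ∑ k ∈ Finset.Icc 1 m, Complex.exp (2 * Real.pi * Complex.I * k * n / m) := by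
      refine Finset.sum_nbij' (fun p => p / d) (fun k => d * k) ?_ ?_ ?_ ?_ ?_
      · intro p hp
        simp only [Finset.mem_filter, Finset.mem_Icc] at hp
        obtain ⟨⟨h1, h2⟩, k, rfl⟩ := hp
        simp only [Nat.mul_div_cancel_left k hd0, Finset.mem_Icc]
        constructor
        · rcases Nat.eq_zero_or_pos k with rfl | hk
          · simp at h1
          · exact hk
        · exact Nat.le_of_mul_le_mul_left h2 hd0
      · intro k hk
        rw [Finset.mem_Icc] at hk
        simp only [Finset.mem_filter, Finset.mem_Icc]
        exact ⟨⟨Nat.mul_pos hd0 hk.1, Nat.mul_le_mul_left d hk.2⟩, Dvd.intro k rfl⟩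
      · intro p hp
        simp only [Finset.mem_filter] at hp
        obtain ⟨-, k, rfl⟩ := hp
        simp only [Nat.mul_div_cancel_left k hd0]
      · intro k _
        simp only [Nat.mul_div_cancel_left k hd0]
      · intro p hp
        simp only [Finset.mem_filter, Finset.mem_Icc] at hp
        obtain ⟨-, k, rfl⟩ := hp
        simp only [Nat.mul_div_cancel_left k hd0]
        congr 1
        have hdC : (d : ℂ) ≠ 0 := Nat.cast_ne_zero.mpr hd0.ne'
        have hmC : (m : ℂ) ≠ 0 := Nat.cast_ne_zero.mpr hm0.ne'
        push_cast
        field_simp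
    calc (∑ p ∈ Finset.Icc 1 (d * m),
        (if d ∣ p then ((ArithmeticFunction.moebius d : ℤ) : ℂ) else 0) *
          Complex.exp (2 * Real.pi * Complex.I * p * n / ((d * m : ℕ) : ℂ)))
        = ∑ p ∈ (Finset.Icc 1 (d * m)).filter (d ∣ ·),
            ((ArithmeticFunction.moebius d : ℤ) : ℂ) *
              Complex.exp (2 * Real.pi * Complex.I * p * n / ((d * m : ℕ) : ℂ)) := by
          rw [Finset.sum_filter]
          exact Finset.sum_congr rfl fun p _ => by split <;> simp
      _ = ((ArithmeticFunction.moebius d : ℤ) : ℂ) *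
            ∑ p ∈ (Finset.Icc 1 (d * m)).filter (d ∣ ·),
              Complex.exp (2 * Real.pi * Complex.I * p * n / ((d * m : ℕ) : ℂ)) := by
          rw [Finset.mul_sum]
      _ = ((ArithmeticFunction.moebius d : ℤ) : ℂ) *
            (if m ∣ n then (m : ℂ) else 0) := by rw [key, sum_exp_eq m n hm0]
  rw [Finset.sum_congr rfl step2]
  -- Step 3: flip divisors
  have := Nat.sum_div_divisors (α := ℂ) q
    (fun d => ((ArithmeticFunction.moebius (q / d) : ℤ) : ℂ) * (if d ∣ n then (d : ℂ) else 0))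
  rw [← this]
  refine Finset.sum_congr rfl fun d hd => ?_
  rw [Nat.mem_divisors] at hd
  rw [Nat.div_div_self hd.1 hd.2]

lemma abs_ramanujanSum_le (q n : ℕ) (hq : 0 < q) (hn : 0 < n) :
    ‖ramanujanSum q n‖ ≤ ∑ d ∈ n.divisors, (d : ℝ) := by
  rw [ramanujanSum_eq q n hq]
  refine le_trans (norm_sum_le _ _) ?_
  have h1 : ∀ d ∈ q.divisors,
      ‖((ArithmeticFunction.moebius (q / d) : ℤ) : ℂ) * (if d ∣ n then (d : ℂ) else 0)‖ ≤
        (if d ∣ n then (d : ℝ) else 0) := by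
    intro d _
    rw [norm_mul]
    have hμ : ‖((ArithmeticFunction.moebius (q / d) : ℤ) : ℂ)‖ ≤ 1 := by
      rw [Complex.norm_intCast]
      exact_mod_cast ArithmeticFunction.abs_moebius_le_one
    split
    · refine le_trans (mul_le_of_le_one_left (norm_nonneg _) hμ) ?_
      simp
    · simp
  refine le_trans (Finset.sum_le_sum h1) ?_
  rw [← Finset.sum_filter]
  refine Finset.sum_le_sum_of_subset_of_nonneg ?_ (fun i _ _ => by positivity)
  intro d hd
  simp only [Finset.mem_filter, Nat.mem_divisors] at hd ⊢
  exact ⟨hd.2, hn.ne'⟩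

set_option maxHeartbeats 1000000 in
open scoped LSeries.notation in
theorem sigma_eq_ramanujan_series (n : ℕ) (hn : 0 < n) :
    Summable (fun q : ℕ => ‖ramanujanSum (q + 1) n / ((q + 1 : ℕ) : ℂ) ^ 2‖) ∧
    ((∑ d ∈ n.divisors, d : ℕ) : ℂ) =
      ((Real.pi : ℂ) ^ 2 * n / 6) *
        ∑' q : ℕ, ramanujanSum (q + 1) n / ((q + 1 : ℕ) : ℂ) ^ 2 := by
  have hn0 : n ≠ 0 := hn.ne'
  have hπ : ((Real.pi : ℂ)) ^ 2 ≠ 0 := by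
    have h : (Real.pi : ℂ) ≠ 0 := by exact_mod_cast Real.pi_ne_zero
    exact pow_ne_zero 2 h
  -- Part 1: summability
  have hC : ∀ q : ℕ, ‖ramanujanSum (q + 1) n / ((q + 1 : ℕ) : ℂ) ^ 2‖ ≤
      (∑ d ∈ n.divisors, (d : ℝ)) * (1 / ((q + 1 : ℕ) : ℝ) ^ 2) := by
    intro q
    rw [norm_div, norm_pow, Complex.norm_natCast]
    rw [div_le_iff₀ (by positivity)]
    calc ‖ramanujanSum (q + 1) n‖ ≤ ∑ d ∈ n.divisors, (d : ℝ) :=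
          abs_ramanujanSum_le _ n (Nat.succ_pos q) hn
      _ = (∑ d ∈ n.divisors, (d : ℝ)) * (1 / ((q + 1 : ℕ) : ℝ) ^ 2) * ((q + 1 : ℕ) : ℝ) ^ 2 := by
          have : (((q + 1 : ℕ) : ℝ)) ^ 2 ≠ 0 := by positivity
          field_simp
  have hsum1 : Summable (fun q : ℕ =>
      (∑ d ∈ n.divisors, (d : ℝ)) * (1 / ((q + 1 : ℕ) : ℝ) ^ 2)) := by
    apply Summable.mul_left
    exact (summable_nat_add_iff (f := fun q : ℕ => 1 / ((q : ℝ)) ^ 2) 1).mpr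
      (Real.summable_one_div_nat_pow.mpr one_lt_two)
  have hsummable : Summable (fun q : ℕ =>
      ‖ramanujanSum (q + 1) n / ((q + 1 : ℕ) : ℂ) ^ 2‖) :=
    Summable.of_nonneg_of_le (fun q => norm_nonneg _) hC hsum1
  refine ⟨hsummable, ?_⟩
  -- Part 2
  classical
  set c : ℕ → ℂ := ↗(ArithmeticFunction.moebius) with hc
  have hs2 : (1 : ℝ) < (2 : ℂ).re := by norm_num
  have hLμs : LSeriesSummable c 2 := ArithmeticFunction.LSeriesSummable_moebius_iff.mpr hs2
  have hLμ : LSeries c 2 = 6 / (Real.pi : ℂ) ^ 2 := by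
    have h1 := ArithmeticFunction.LSeries_zeta_mul_Lseries_moebius (s := 2) hs2
    rw [ArithmeticFunction.LSeries_zeta_eq_riemannZeta hs2, riemannZeta_two] at h1
    field_simp at h1 ⊢
    linear_combination h1
  set t : ℕ → ℕ → ℂ :=
    fun d q => if d ∣ q ∧ q ≠ 0 then c (q / d) * d / (q : ℂ) ^ 2 else 0 with ht
  have h2nat : ∀ m : ℕ, ((m : ℂ)) ^ (2 : ℂ) = ((m : ℂ)) ^ (2 : ℕ) := by
    intro m
    rw [show (2 : ℂ) = ((2 : ℕ) : ℂ) by norm_num, Complex.cpow_natCast]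
  have hterm : ∀ d : ℕ, 0 < d → ∀ m : ℕ, t d (d * m) = (d : ℂ)⁻¹ * LSeries.term c 2 m := by
    intro d hd m
    have hdC : (d : ℂ) ≠ 0 := Nat.cast_ne_zero.mpr hd.ne'
    rcases eq_or_ne m 0 with rfl | hm
    · simp [ht, LSeries.term]
    · have hdm : d * m ≠ 0 := by positivity
      have hmC : (m : ℂ) ≠ 0 := Nat.cast_ne_zero.mpr hm
      simp only [ht]
      rw [if_pos ⟨Dvd.intro m rfl, hdm⟩, Nat.mul_div_cancel_left m hd,
        LSeries.term_of_ne_zero hm, h2nat]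
      push_cast
      field_simp
  have hinj : ∀ d : ℕ, 0 < d → Function.Injective (fun m : ℕ => d * m) := by
    intro d hd a b h
    exact Nat.eq_of_mul_eq_mul_left hd h
  have hoff : ∀ d : ℕ, ∀ x : ℕ, x ∉ Set.range (fun m : ℕ => d * m) → t d x = 0 := by
    intro d x hx
    simp only [ht]
    rw [if_neg]
    rintro ⟨⟨k, rfl⟩, -⟩
    exact hx ⟨k, rfl⟩
  have hsumm_t' : ∀ d : ℕ, 0 < d → Summable (fun m => t d (d * m)) := by
    intro d hd
    exact (hLμs.mul_left ((d : ℂ)⁻¹)).congr fun m => (hterm d hd m).symm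
  have hsumm_t : ∀ d : ℕ, 0 < d → Summable (t d) := by
    intro d hd
    exact ((hinj d hd).summable_iff (hoff d)).mp (hsumm_t' d hd)
  have htsum_t : ∀ d : ℕ, 0 < d → ∑' q : ℕ, t d q = (d : ℂ)⁻¹ * LSeries c 2 := by
    intro d hd
    have hsupp : Function.support (t d) ⊆ Set.range (fun m : ℕ => d * m) := by
      intro x hx
      by_contra h
      exact hx (hoff d x h)
    rw [← (hinj d hd).tsum_eq hsupp]
    calc ∑' m : ℕ, t d (d * m) = ∑' m : ℕ, (d : ℂ)⁻¹ * LSeries.term c 2 m :=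
          tsum_congr (hterm d hd)
      _ = (d : ℂ)⁻¹ * LSeries c 2 := tsum_mul_left
  have hpointwise : ∀ q : ℕ,
      (if q = 0 then 0 else ramanujanSum q n / (q : ℂ) ^ 2) = ∑ d ∈ n.divisors, t d q := by
    intro q
    rcases eq_or_ne q 0 with rfl | hq
    · simp [ht]
    · rw [if_neg hq]
      have hqpos : 0 < q := Nat.pos_of_ne_zero hq
      rw [ramanujanSum_eq q n hqpos, Finset.sum_div]
      have hL : ∀ d ∈ q.divisors,
          ((ArithmeticFunction.moebius (q / d) : ℤ) : ℂ) * (if d ∣ n then (d : ℂ) else 0) / (q : ℂ) ^ 2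
            = if d ∣ n then c (q / d) * d / (q : ℂ) ^ 2 else 0 := by
        intro d _
        split <;> simp [hc]
      rw [Finset.sum_congr rfl hL, ← Finset.sum_filter]
      have hR : (∑ d ∈ n.divisors, t d q)
          = ∑ d ∈ n.divisors.filter (· ∣ q), c (q / d) * d / (q : ℂ) ^ 2 := by
        rw [Finset.sum_filter]
        refine Finset.sum_congr rfl fun d _ => ?_
        simp only [ht]
        by_cases h : d ∣ q
        · rw [if_pos ⟨h, hq⟩, if_pos h]
        · rw [if_neg (fun hh => h hh.1), if_neg h]
      rw [hR]
      congr 1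
      ext d
      simp only [Finset.mem_filter, Nat.mem_divisors]
      constructor
      · rintro ⟨⟨h1, -⟩, h2⟩; exact ⟨⟨h2, hn0⟩, h1⟩
      · rintro ⟨⟨h1, -⟩, h2⟩; exact ⟨⟨h2, hq⟩, h1⟩
  set G : ℕ → ℂ := fun q => if q = 0 then 0 else ramanujanSum q n / (q : ℂ) ^ 2 with hGdef
  have hGsum : Summable G := by
    refine (summable_sum (fun d hd => hsumm_t d (Nat.pos_of_mem_divisors hd))).congr
      fun q => (hpointwise q).symm
  have hshift : (∑' q : ℕ, ramanujanSum (q + 1) n / ((q + 1 : ℕ) : ℂ) ^ 2) = ∑' q : ℕ, G q := by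
    rw [hGsum.tsum_eq_zero_add]
    have hG0 : G 0 = 0 := by simp [hGdef]
    rw [hG0, zero_add]
    refine tsum_congr fun q => ?_
    simp only [hGdef]
    rw [if_neg (Nat.succ_ne_zero q)]
  have hGval : (∑' q : ℕ, G q) = (∑ d ∈ n.divisors, (d : ℂ)⁻¹) * LSeries c 2 := by
    calc (∑' q : ℕ, G q) = ∑' q : ℕ, ∑ d ∈ n.divisors, t d q := tsum_congr hpointwise
      _ = ∑ d ∈ n.divisors, ∑' q : ℕ, t d q :=
          Summable.tsum_finsetSum fun d hd => hsumm_t d (Nat.pos_of_mem_divisors hd)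
      _ = ∑ d ∈ n.divisors, (d : ℂ)⁻¹ * LSeries c 2 :=
          Finset.sum_congr rfl fun d hd => htsum_t d (Nat.pos_of_mem_divisors hd)
      _ = (∑ d ∈ n.divisors, (d : ℂ)⁻¹) * LSeries c 2 := by rw [Finset.sum_mul]
  rw [hshift, hGval, hLμ]
  have hsum_inv : (n : ℂ) * ∑ d ∈ n.divisors, (d : ℂ)⁻¹ = ((∑ d ∈ n.divisors, d : ℕ) : ℂ) := by
    rw [Finset.mul_sum]
    have h1 : ∀ d ∈ n.divisors, (n : ℂ) * (d : ℂ)⁻¹ = ((n / d : ℕ) : ℂ) := by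
      intro d hd
      have hdvd := (Nat.mem_divisors.mp hd).1
      have hdC : (d : ℂ) ≠ 0 :=
        Nat.cast_ne_zero.mpr (Nat.pos_of_mem_divisors hd).ne'
      rw [Nat.cast_div hdvd hdC, div_eq_mul_inv]
    rw [Finset.sum_congr rfl h1]
    rw [Nat.sum_div_divisors n (fun d => ((d : ℕ) : ℂ))]
    push_cast
    rfl
  rw [← hsum_inv]
  field_simp
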